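/- Let k be odd and let G be the binary graph on n = 2^(k−1) − 1 vertices whose vertices are the odd-weight vectors in F₂^k other than the all-ones vector, with u ~ v iff ⟨u,v⟩ = 1. Then for any two distinct adjacent vertices u, v the number of common neighbors is 2^(k−3) − 3, and for any two distinct non-adjacent vertices it is 2^(k−3) − 1. -/

import Mathlib

/-- The vertices of the binary graph: binary `k`-tuples with an odd number of ones
(equivalently, summing to `1` over `F₂`), excluding the all-ones vector. -/
def BinaryVertex (k : ℕ) : Type :=
  {v : Fin k → ZMod 2 // (∑ i, v i) = 1 ∧ v ≠ fun _ => 1}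

/-- The binary graph: `u` is adjacent to `v` iff `u ≠ v` and `⟨u, v⟩ = 1` over `F₂`. -/
def binaryGraph (k : ℕ) : SimpleGraph (BinaryVertex k) where
  Adj u v := u ≠ v ∧ (∑ i, u.1 i * v.1 i) = 1
  symm := by
    refine ⟨?_⟩
    rintro u v ⟨h1, h2⟩
    refine ⟨h1.symm, ?_⟩
    calc (∑ i, v.1 i * u.1 i) = ∑ i, u.1 i * v.1 i :=
          Finset.sum_congr rfl fun i _ => mul_comm _ _
      _ = 1 := h2
  loopless := by
    refine ⟨?_⟩
    rintro v ⟨h1, -⟩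
    exact h1 rfl

/-!
Write `1` for the all-ones vector. Since `k` is odd, `⟨1, x⟩ = 1` says that `x` has odd weight, so
the common neighbours of `u` and `v` are the points of the affine subspace
`⟨1, x⟩ = ⟨u, x⟩ = ⟨v, x⟩ = 1` other than `1`, `u` and `v`. The vectors `1, u, v` are linearly
independent (`1 + u + v` has odd weight), so that subspace has `2^(k-3)` points. It always
contains `1`, and, because `⟨u, u⟩ = 1` for odd-weight `u`, it contains `u` and `v` exactly
when `⟨u, v⟩ = 1`.
-/

open Matrix Module

theorem ncard_setOf_forall_dotProduct_eq {K ι κ : Type*} [Field K] [Finite K] [Fintype ι]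
    [Fintype κ] {a : κ → ι → K} (ha : LinearIndependent K a) (b : κ → K) :
    {x : ι → K | ∀ j, a j ⬝ᵥ x = b j}.ncard =
      Nat.card K ^ (Fintype.card ι - Fintype.card κ) := by
  set f := (Matrix.of a).mulVecLin
  have hrange : finrank K (LinearMap.range f) = Fintype.card κ :=
    LinearIndependent.rank_matrix (M := Matrix.of a) ha
  have hsurj : Function.Surjective f := by
    rw [← LinearMap.range_eq_top]
    apply Submodule.eq_top_of_finrank_eq
    simp [hrange]
  have hker : finrank K (LinearMap.ker f) = Fintype.card ι - Fintype.card κ := by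
    have := LinearMap.finrank_range_add_finrank_ker f
    simp only [hrange, finrank_fintype_fun_eq_card] at this
    omega
  have hfiber : {x : ι → K | ∀ j, a j ⬝ᵥ x = b j} = f ⁻¹' {b} := by
    ext x
    simp [f, funext_iff, Matrix.mulVec]
  calc {x : ι → K | ∀ j, a j ⬝ᵥ x = b j}.ncard
      = Nat.card (LinearMap.ker f) := by
        rw [hfiber, ← Nat.card_coe_set_eq]
        exact Nat.card_congr
          (AddMonoidHom.fiberEquivKerOfSurjective (f := f.toAddMonoidHom) hsurj b)
    _ = Nat.card K ^ (Fintype.card ι - Fintype.card κ) := by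
        rw [natCard_eq_pow_finrank (K := K), hker]

theorem ZModModule.linearIndependent_three {M : Type*} [AddCommGroup M] [Module (ZMod 2) M]
    {a b c : M} (ha : a ≠ 0) (hb : b ≠ 0) (hc : c ≠ 0) (hab : a + b ≠ 0) (hac : a + c ≠ 0)
    (hbc : b + c ≠ 0) (habc : a + b + c ≠ 0) : LinearIndependent (ZMod 2) ![a, b, c] := by
  rw [Fintype.linearIndependent_iff]
  intro g hg i
  rw [Fin.sum_univ_three] at hg
  have h01 : ∀ x : ZMod 2, x = 0 ∨ x = 1 := by decide
  rcases h01 (g 0) with h0 | h0 <;> rcases h01 (g 1) with h1 | h1 <;>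
    rcases h01 (g 2) with h2 | h2 <;>
    simp only [h0, h1, h2, Matrix.cons_val, one_smul, zero_smul, add_zero, zero_add] at hg <;>
    first | exact absurd hg ‹_› | fin_cases i <;> assumption

theorem ZMod.dotProduct_self_eq_sum {ι : Type*} [Fintype ι] (x : ι → ZMod 2) :
    x ⬝ᵥ x = ∑ i, x i :=
  Finset.sum_congr rfl fun i _ => by rw [← sq, ZMod.pow_card]

namespace BinaryVertex

variable {k : ℕ}

lemma sum_eq_one (u : BinaryVertex k) : ∑ i, u.1 i = 1 := u.2.1

lemma val_ne_one (u : BinaryVertex k) : u.1 ≠ 1 := u.2.2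

lemma val_dotProduct_self (u : BinaryVertex k) : u.1 ⬝ᵥ u.1 = 1 := by
  rw [ZMod.dotProduct_self_eq_sum, u.sum_eq_one]

lemma one_dotProduct_one_of_odd (hk : Odd k) : (1 : Fin k → ZMod 2) ⬝ᵥ 1 = 1 := by
  rw [one_dotProduct_one, Fintype.card_fin, hk.natCast_zmod_two]

lemma linearIndependent_one_val_val (hk : Odd k) {u v : BinaryVertex k} (huv : u ≠ v) :
    LinearIndependent (ZMod 2) ![1, u.1, v.1] := by
  have ne_zero : ∀ x : Fin k → ZMod 2, 1 ⬝ᵥ x = 1 → x ≠ 0 := by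
    rintro x hx rfl
    simp at hx
  have add_ne_zero {x y : Fin k → ZMod 2} (h : x ≠ y) : x + y ≠ 0 := by
    rwa [Ne, add_eq_zero_iff_eq_neg, ZModModule.neg_eq_self]
  refine ZModModule.linearIndependent_three (ne_zero _ (one_dotProduct_one_of_odd hk))
    (ne_zero _ ?_) (ne_zero _ ?_) (add_ne_zero u.val_ne_one.symm)
    (add_ne_zero v.val_ne_one.symm) (add_ne_zero fun h => huv (Subtype.ext h)) (ne_zero _ ?_)
  · rw [one_dotProduct, u.sum_eq_one]
  · rw [one_dotProduct, v.sum_eq_one]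
  · rw [dotProduct_add, dotProduct_add, one_dotProduct_one_of_odd hk, one_dotProduct,
      one_dotProduct, u.sum_eq_one, v.sum_eq_one]
    decide

lemma ncard_one_val_val {u v : BinaryVertex k} (huv : u ≠ v) :
    ({1, u.1, v.1} : Set (Fin k → ZMod 2)).ncard = 3 :=
  Set.ncard_eq_three.2 ⟨1, u.1, v.1, u.val_ne_one.symm, v.val_ne_one.symm,
    fun h => huv (Subtype.ext h), rfl⟩

def commonNeighborSpace (u v : BinaryVertex k) : Set (Fin k → ZMod 2) :=
  {x | ∀ j, ![1, u.1, v.1] j ⬝ᵥ x = 1}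

lemma mem_commonNeighborSpace {u v : BinaryVertex k} {x : Fin k → ZMod 2} :
    x ∈ commonNeighborSpace u v ↔ ∑ i, x i = 1 ∧ u.1 ⬝ᵥ x = 1 ∧ v.1 ⬝ᵥ x = 1 := by
  simp [commonNeighborSpace, Fin.forall_fin_succ, one_dotProduct]

lemma ncard_commonNeighborSpace (hk : Odd k) {u v : BinaryVertex k} (huv : u ≠ v) :
    (commonNeighborSpace u v).ncard = 2 ^ (k - 3) := by
  simpa [commonNeighborSpace] using
    ncard_setOf_forall_dotProduct_eq (linearIndependent_one_val_val hk huv) 1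

lemma one_mem_commonNeighborSpace (hk : Odd k) (u v : BinaryVertex k) :
    1 ∈ commonNeighborSpace u v := by
  rw [mem_commonNeighborSpace, ← one_dotProduct, one_dotProduct_one_of_odd hk, dotProduct_one,
    dotProduct_one, u.sum_eq_one, v.sum_eq_one]
  exact ⟨rfl, rfl, rfl⟩

lemma val_left_mem_commonNeighborSpace_iff {u v : BinaryVertex k} :
    u.1 ∈ commonNeighborSpace u v ↔ u.1 ⬝ᵥ v.1 = 1 := by
  simp [mem_commonNeighborSpace, u.sum_eq_one, u.val_dotProduct_self, dotProduct_comm v.1]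

lemma val_right_mem_commonNeighborSpace_iff {u v : BinaryVertex k} :
    v.1 ∈ commonNeighborSpace u v ↔ u.1 ⬝ᵥ v.1 = 1 := by
  simp [mem_commonNeighborSpace, v.sum_eq_one, v.val_dotProduct_self]

lemma insert_val_val_subset_commonNeighborSpace (hk : Odd k) {u v : BinaryVertex k}
    (h : u.1 ⬝ᵥ v.1 = 1) : {1, u.1, v.1} ⊆ commonNeighborSpace u v := by
  rintro x (rfl | rfl | rfl)
  exacts [one_mem_commonNeighborSpace hk u v, val_left_mem_commonNeighborSpace_iff.2 h,
    val_right_mem_commonNeighborSpace_iff.2 h]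

lemma commonNeighborSpace_sdiff_eq_sdiff_one {u v : BinaryVertex k} (h : u.1 ⬝ᵥ v.1 ≠ 1) :
    commonNeighborSpace u v \ {1, u.1, v.1} = commonNeighborSpace u v \ {1} := by
  have hu := mt val_left_mem_commonNeighborSpace_iff.1 h
  have hv := mt val_right_mem_commonNeighborSpace_iff.1 h
  ext x
  simp only [Set.mem_sdiff, Set.mem_insert_iff, Set.mem_singleton_iff]
  constructor
  · tauto
  · rintro ⟨hx, h1⟩
    exact ⟨hx, by rintro (h | rfl | rfl) <;> contradiction⟩

end BinaryVertex

open BinaryVertex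

lemma binaryGraph_adj_iff {k : ℕ} {u v : BinaryVertex k} :
    (binaryGraph k).Adj u v ↔ u ≠ v ∧ u.1 ⬝ᵥ v.1 = 1 :=
  Iff.rfl

lemma image_val_binaryGraph_commonNeighbors {k : ℕ} (u v : BinaryVertex k) :
    (fun w : BinaryVertex k => w.1) '' (binaryGraph k).commonNeighbors u v =
      commonNeighborSpace u v \ {1, u.1, v.1} := by
  ext x
  simp only [Set.mem_image, SimpleGraph.mem_commonNeighbors, binaryGraph_adj_iff, Set.mem_sdiff,
    Set.mem_insert_iff, Set.mem_singleton_iff, mem_commonNeighborSpace]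
  constructor
  · rintro ⟨w, ⟨⟨huw, hu⟩, hvw, hv⟩, rfl⟩
    refine ⟨⟨w.sum_eq_one, hu, hv⟩, ?_⟩
    rintro (h | h | h)
    exacts [w.val_ne_one h, huw (Subtype.ext h.symm), hvw (Subtype.ext h.symm)]
  · rintro ⟨⟨hsum, hu, hv⟩, hx⟩
    refine ⟨⟨x, hsum, fun h => hx (Or.inl h)⟩, ⟨⟨?_, hu⟩, ?_, hv⟩, rfl⟩
    · exact fun h => hx (Or.inr (Or.inl (congrArg Subtype.val h).symm))
    · exact fun h => hx (Or.inr (Or.inr (congrArg Subtype.val h).symm))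

lemma card_binaryGraph_commonNeighbors {k : ℕ} (u v : BinaryVertex k) :
    Nat.card ((binaryGraph k).commonNeighbors u v) =
      (commonNeighborSpace u v \ {1, u.1, v.1}).ncard := by
  rw [← image_val_binaryGraph_commonNeighbors,
    Set.ncard_image_of_injective (f := fun w : BinaryVertex k => w.1) _ fun _ _ => Subtype.ext,
    Nat.card_coe_set_eq]

/-- In the binary graph (odd `k`), any two distinct adjacent vertices have
exactly `2^(k−3) − 3` common neighbors, and any two distinct non-adjacent vertices have
exactly `2^(k−3) − 1` common neighbors. -/
theorem binaryGraph_commonNeighbors_card (k : ℕ) (hk : Odd k)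
    (u v : BinaryVertex k) (huv : u ≠ v) :
    ((binaryGraph k).Adj u v →
      Nat.card ((binaryGraph k).commonNeighbors u v) = 2 ^ (k - 3) - 3) ∧
    (¬ (binaryGraph k).Adj u v →
      Nat.card ((binaryGraph k).commonNeighbors u v) = 2 ^ (k - 3) - 1) := by
  rw [card_binaryGraph_commonNeighbors, ← ncard_commonNeighborSpace hk huv]
  constructor
  · rintro ⟨-, hadj⟩
    rw [Set.ncard_sdiff (insert_val_val_subset_commonNeighborSpace hk hadj), ncard_one_val_val huv]
  · intro hnadj
    rw [commonNeighborSpace_sdiff_eq_sdiff_one fun h => hnadj ⟨huv, h⟩,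
      Set.ncard_sdiff_singleton_of_mem (one_mem_commonNeighborSpace hk u v)]
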